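/- Let M₁ and M₂ be matroids on disjoint ground sets and let M = M₁ ⊕ M₂ be their direct sum. Then the combinatorial derived matroid of M is the direct sum of the combinatorial derived matroids: δ(M₁ ⊕ M₂) = δ(M₁) ⊕ δ(M₂), where the ground set 𝒞(M) of δM is the disjoint union 𝒞(M₁) ⊔ 𝒞(M₂) and a set is dependent in the direct sum of two matroids iff its intersection with at least one of the two ground sets is dependent in the corresponding matroid. -/

import Mathlib

/-!
The circuits of `M₁ ⊕ M₂` are `𝒞₁ ⊔ 𝒞₂`, where `𝒞ⱼ` are the circuits of `Mⱼ`, and both `|A|` and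
the nullity of `supp A` are additive over the parts `A ∩ 𝒞₁` and `A ∩ 𝒞₂`. By induction on `i`, a
family inside `𝒞₁` is in `𝒜ᵢ(M₁ ⊕ M₂)` iff it is in `𝒜ᵢ(M₁)`, and every member of `𝒜ᵢ(M₁ ⊕ M₂)`
has its `𝒞₁`-part in `𝒜ᵢ(M₁)` or its `𝒞₂`-part in `𝒜ᵢ(M₂)`.

An elimination `(B₁ ∪ B₂) ∖ {c}` with `c ∈ 𝒞₁` contains a dependent `Bⱼ ∩ 𝒞₂`, or else the
elimination at `c` of the dependent families `B₁ ∩ 𝒞₁` and `B₂ ∩ 𝒞₁`, provided `B₁ ∩ B₂ ∩ 𝒞₁` is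
not dependent. From level `1` on the `𝒜ᵢ` are closed upwards, so otherwise `B₁ ∩ B₂` would be
dependent, which is excluded. At level `0`, counting `|·| - nullity` shows that then either some
`(Bⱼ ∩ 𝒞₁) ∖ {c}` is still in `𝒜₀(M₁)`, or the `𝒞₂`-parts have a dependent union at level `1`.
-/

open Set

namespace DM

variable {α : Type*}

/-- A circuit of a matroid: an inclusion-minimal dependent set. -/
def IsCircuit (M : Matroid α) (C : Set α) : Prop :=
  M.Dep C ∧ ∀ D, M.Dep D → D ⊆ C → D = C

/-- The collection 𝒞 of circuits of `M`. -/
def circuits (M : Matroid α) : Set (Set α) := {C | IsCircuit M C}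

/-- The rank of a set: the maximal cardinality of an independent subset. -/
noncomputable def rk (M : Matroid α) (S : Set α) : ℕ :=
  sSup {m : ℕ | ∃ I, I ⊆ S ∧ M.Indep I ∧ I.ncard = m}

/-- The nullity function n(S) = |S| - r(S). -/
noncomputable def nullity (M : Matroid α) (S : Set α) : ℕ := S.ncard - rk M S

/-- The support of a family of sets. -/
def supp (A : Set (Set α)) : Set α := ⋃₀ A

/-- The initial collection 𝒜₀ = {A ⊆ 𝒞 : |A| > n(supp A)}. -/
noncomputable def A0 (M : Matroid α) : Set (Set (Set α)) :=
  {A | A ⊆ circuits M ∧ nullity M (supp A) < A.ncard}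

/-- The operation ε. -/
def eps (X : Set (Set (Set α))) : Set (Set (Set α)) :=
  X ∪ {B | ∃ A₁ ∈ X, ∃ A₂ ∈ X, A₁ ∩ A₂ ∉ X ∧ ∃ C ∈ A₁ ∩ A₂, B = (A₁ ∪ A₂) \ {C}}

/-- The up-closure ↑X = {A ⊆ 𝒞 : ∃ A' ∈ X, A' ⊆ A} within the ground collection 𝒞. -/
def up (𝒞 : Set (Set α)) (X : Set (Set (Set α))) : Set (Set (Set α)) :=
  {A | A ⊆ 𝒞 ∧ ∃ A' ∈ X, A' ⊆ A}

/-- The increasing sequence 𝒜ᵢ with 𝒜₍ᵢ₊₁₎ = ↑ε(𝒜ᵢ). -/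
noncomputable def Ai (M : Matroid α) : ℕ → Set (Set (Set α))
  | 0 => A0 M
  | (i+1) => up (circuits M) (eps (Ai M i))

/-- 𝒜 = ⋃ᵢ 𝒜ᵢ : the collection of dependent sets of the combinatorial derived matroid δM. -/
noncomputable def derivedDep (M : Matroid α) : Set (Set (Set α)) := ⋃ i, Ai M i

section Rank

variable {M : Matroid α} {S T I : Set α}

lemma rk_eq_ncard (hS : S.Finite) (hI : M.IsBasis' I S) : rk M S = I.ncard := by
  have hIfin : I.Finite := hS.subset hI.subset
  refine le_antisymm (csSup_le ⟨0, ∅, empty_subset S, M.empty_indep, ncard_empty α⟩ ?_)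
    (le_csSup ⟨S.ncard, ?_⟩ ⟨I, hI.subset, hI.indep, rfl⟩)
  · rintro _ ⟨J, hJS, hJ, rfl⟩
    have hle := hI.encard_eq_eRk ▸ hJ.encard_le_eRk_of_subset hJS
    rw [← (hS.subset hJS).cast_ncard_eq, ← hIfin.cast_ncard_eq] at hle
    exact_mod_cast hle
  · rintro _ ⟨J, hJS, -, rfl⟩
    exact ncard_le_ncard hJS hS

lemma nullity_eq_ncard_sdiff (hS : S.Finite) (hI : M.IsBasis' I S) :
    nullity M S = (S \ I).ncard := by
  rw [nullity, rk_eq_ncard hS hI, ncard_sdiff hI.subset (hS.subset hI.subset)]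

lemma nullity_mono (hT : T.Finite) (hST : S ⊆ T) : nullity M S ≤ nullity M T := by
  obtain ⟨I, hI⟩ := M.exists_isBasis' S
  obtain ⟨J, hJ, hIJ⟩ := hI.indep.subset_isBasis'_of_subset (hI.subset.trans hST)
  have hJS : J ∩ S = I := hI.inter_eq_of_subset_indep hIJ hJ.indep
  rw [nullity_eq_ncard_sdiff (hT.subset hST) hI, nullity_eq_ncard_sdiff hT hJ]
  refine ncard_le_ncard (fun x ⟨hxS, hxI⟩ => ⟨hST hxS, fun hxJ => hxI ?_⟩) hT.sdiff
  exact hJS ▸ ⟨hxJ, hxS⟩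

lemma one_le_nullity_of_isCircuit {C : Set α} (hC : M.IsCircuit C) (hCfin : C.Finite) :
    1 ≤ nullity M C := by
  obtain ⟨I, hI⟩ := M.exists_isBasis' C
  rw [nullity_eq_ncard_sdiff hCfin hI, Nat.one_le_iff_ne_zero, ← Nat.pos_iff_ne_zero,
    ncard_pos hCfin.sdiff, sdiff_nonempty]
  exact fun hCI => hC.not_indep (hI.indep.subset hCI)

/-- Each element outside a basis of `R` lies in its own fundamental circuit inside `R`. -/
lemma nullity_le_ncard_circuits {R : Set α} (hR : R.Finite) (hRE : R ⊆ M.E) :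
    nullity M R ≤ {C | M.IsCircuit C ∧ C ⊆ R}.ncard := by
  obtain ⟨I, hI⟩ := M.exists_isBasis R
  rw [nullity_eq_ncard_sdiff hR hI.isBasis']
  refine ncard_le_ncard_of_injOn (M.fundCircuit · I) (fun e he => ⟨?_, ?_⟩) ?_
    (hR.finite_subsets.subset fun _ hC => hC.2)
  · exact hI.indep.fundCircuit_isCircuit (hI.subset_closure he.1) he.2
  · exact (M.fundCircuit_subset_insert e I).trans (insert_subset he.1 hI.subset)
  · intro e he f _ hef
    have hef : M.fundCircuit e I = M.fundCircuit f I := hef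
    have hef' : e ∈ M.fundCircuit f I := hef ▸ M.mem_fundCircuit e I
    exact (M.fundCircuit_subset_insert f I hef').resolve_right he.2

end Rank

section Circuits

variable {M : Matroid α} {A B : Set (Set α)}

lemma mem_circuits_iff {C : Set α} : C ∈ circuits M ↔ M.IsCircuit C :=
  Matroid.isCircuit_iff.symm

lemma circuits_finite (hE : M.E.Finite) : (circuits M).Finite :=
  hE.finite_subsets.subset fun _ hC => (mem_circuits_iff.1 hC).subset_ground

lemma supp_mono (hAB : A ⊆ B) : supp A ⊆ supp B :=
  sUnion_mono hAB

lemma supp_union : supp (A ∪ B) = supp A ∪ supp B :=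
  sUnion_union A B

lemma supp_subset_ground (hA : A ⊆ circuits M) : supp A ⊆ M.E :=
  sUnion_subset fun _ hC => (mem_circuits_iff.1 (hA hC)).subset_ground

lemma supp_finite (hE : M.E.Finite) (hA : A ⊆ circuits M) : (supp A).Finite :=
  hE.subset (supp_subset_ground hA)

lemma supp_insert_of_subset {C : Set α} (hC : C ⊆ supp A) : supp (insert C A) = supp A :=
  (sUnion_insert C A).trans (union_eq_right.2 hC)

end Circuits

section DisjointSum

variable {M₁ M₂ : Matroid α} {h : Disjoint M₁.E M₂.E} {C : Set α} {A : Set (Set α)}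

lemma disjointSum_restrict_left : (M₁.disjointSum M₂ h).restrict M₁.E = M₁ := by
  refine Matroid.ext_indep rfl fun I (hI : I ⊆ M₁.E) => ?_
  have hI₂ : I ∩ M₂.E = ∅ := (h.mono_left hI).inter_eq
  simp [Matroid.restrict_indep_iff, inter_eq_left.2 hI, hI₂, hI, subset_union_of_subset_left hI]

lemma isCircuit_left_of_not_indep (hC : (M₁.disjointSum M₂ h).IsCircuit C)
    (hC₁ : ¬ M₁.Indep (C ∩ M₁.E)) : M₁.IsCircuit C := by
  have hCE : C ∩ M₁.E = C := hC.eq_of_not_indep_subset (fun hi => hC₁ <| by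
    simpa [inter_assoc] using (Matroid.disjointSum_indep_iff.1 hi).1) inter_subset_left
  rw [← disjointSum_restrict_left (h := h), Matroid.restrict_isCircuit_iff]
  exact ⟨hC, hCE ▸ inter_subset_right⟩

lemma isCircuit_disjointSum_iff :
    (M₁.disjointSum M₂ h).IsCircuit C ↔ M₁.IsCircuit C ∨ M₂.IsCircuit C := by
  have hleft : ∀ {N₁ N₂ : Matroid α} (h' : Disjoint N₁.E N₂.E),
      N₁.IsCircuit C → (N₁.disjointSum N₂ h').IsCircuit C := fun h' hC => by
    rw [← disjointSum_restrict_left (h := h'), Matroid.restrict_isCircuit_iff] at hC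
    exact hC.1
  refine ⟨fun hC => ?_, ?_⟩
  · have hnot : ¬ (M₁.Indep (C ∩ M₁.E) ∧ M₂.Indep (C ∩ M₂.E)) := fun hi =>
      hC.not_indep (Matroid.disjointSum_indep_iff.2 ⟨hi.1, hi.2, by simpa using hC.subset_ground⟩)
    rcases not_and_or.1 hnot with h₁ | h₂
    · exact Or.inl (isCircuit_left_of_not_indep hC h₁)
    · rw [Matroid.disjointSum_comm] at hC
      exact Or.inr (isCircuit_left_of_not_indep hC h₂)
  · rintro (hC | hC)
    · exact hleft h hC
    · rw [Matroid.disjointSum_comm]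
      exact hleft h.symm hC

lemma circuits_disjointSum :
    circuits (M₁.disjointSum M₂ h) = circuits M₁ ∪ circuits M₂ :=
  ext fun _ => mem_circuits_iff.trans
    (isCircuit_disjointSum_iff.trans (or_congr mem_circuits_iff mem_circuits_iff).symm)

lemma disjoint_circuits (h : Disjoint M₁.E M₂.E) : Disjoint (circuits M₁) (circuits M₂) := by
  refine Set.disjoint_left.2 fun C hC₁ hC₂ => ?_
  obtain ⟨e, he⟩ := (mem_circuits_iff.1 hC₁).nonempty
  exact Set.disjoint_left.1 h ((mem_circuits_iff.1 hC₁).subset_ground he)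
    ((mem_circuits_iff.1 hC₂).subset_ground he)

lemma union_inter_eq_left {E₁ E₂ X₁ X₂ : Set α} (hE : Disjoint E₁ E₂) (h₁ : X₁ ⊆ E₁)
    (h₂ : X₂ ⊆ E₂) : (X₁ ∪ X₂) ∩ E₁ = X₁ := by
  rw [union_inter_distrib_right, inter_eq_left.2 h₁, (hE.symm.mono_left h₂).inter_eq, union_empty]

lemma union_inter_eq_right {E₁ E₂ X₁ X₂ : Set α} (hE : Disjoint E₁ E₂) (h₁ : X₁ ⊆ E₁)
    (h₂ : X₂ ⊆ E₂) : (X₁ ∪ X₂) ∩ E₂ = X₂ :=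
  union_comm X₂ X₁ ▸ union_inter_eq_left hE.symm h₂ h₁

lemma nullity_disjointSum_union {S₁ S₂ : Set α} (hS₁ : S₁ ⊆ M₁.E) (hS₂ : S₂ ⊆ M₂.E)
    (hfin₁ : S₁.Finite) (hfin₂ : S₂.Finite) :
    nullity (M₁.disjointSum M₂ h) (S₁ ∪ S₂) = nullity M₁ S₁ + nullity M₂ S₂ := by
  obtain ⟨I₁, hI₁⟩ := M₁.exists_isBasis S₁
  obtain ⟨I₂, hI₂⟩ := M₂.exists_isBasis S₂
  have hIE₁ := hI₁.indep.subset_ground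
  have hIE₂ := hI₂.indep.subset_ground
  have hI : (M₁.disjointSum M₂ h).IsBasis (I₁ ∪ I₂) (S₁ ∪ S₂) := by
    rw [Matroid.disjointSum_isBasis_iff, union_inter_eq_left h hIE₁ hIE₂,
      union_inter_eq_left h hS₁ hS₂, union_inter_eq_right h hIE₁ hIE₂,
      union_inter_eq_right h hS₁ hS₂]
    exact ⟨hI₁, hI₂, union_subset_union hI₁.subset hI₂.subset, union_subset_union hS₁ hS₂⟩
  have hfinI₁ := hfin₁.subset hI₁.subset
  have hfinI₂ := hfin₂.subset hI₂.subset
  have hcard₁ := ncard_le_ncard hI₁.subset hfin₁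
  have hcard₂ := ncard_le_ncard hI₂.subset hfin₂
  rw [nullity, nullity, nullity, rk_eq_ncard (hfin₁.union hfin₂) hI.isBasis',
    rk_eq_ncard hfin₁ hI₁.isBasis', rk_eq_ncard hfin₂ hI₂.isBasis',
    ncard_union_eq (h.mono hS₁ hS₂) hfin₁ hfin₂, ncard_union_eq (h.mono hIE₁ hIE₂) hfinI₁ hfinI₂]
  omega

lemma inter_circuits_union_inter_circuits (hA : A ⊆ circuits (M₁.disjointSum M₂ h)) :
    A ∩ circuits M₁ ∪ A ∩ circuits M₂ = A := by
  rw [← inter_union_distrib_left, ← circuits_disjointSum (h := h), inter_eq_left.2 hA]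

lemma nullity_supp_disjointSum (hE₁ : M₁.E.Finite) (hE₂ : M₂.E.Finite)
    (hA : A ⊆ circuits (M₁.disjointSum M₂ h)) :
    nullity (M₁.disjointSum M₂ h) (supp A) =
      nullity M₁ (supp (A ∩ circuits M₁)) + nullity M₂ (supp (A ∩ circuits M₂)) := by
  conv_lhs => rw [← inter_circuits_union_inter_circuits hA, supp_union]
  exact nullity_disjointSum_union (supp_subset_ground inter_subset_right)
    (supp_subset_ground inter_subset_right) (supp_finite hE₁ inter_subset_right)
    (supp_finite hE₂ inter_subset_right)

lemma ncard_eq_ncard_inter_circuits_add (hE₁ : M₁.E.Finite) (hE₂ : M₂.E.Finite)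
    (hA : A ⊆ circuits (M₁.disjointSum M₂ h)) :
    A.ncard = (A ∩ circuits M₁).ncard + (A ∩ circuits M₂).ncard := by
  conv_lhs => rw [← inter_circuits_union_inter_circuits hA]
  exact ncard_union_eq ((disjoint_circuits h).mono inter_subset_right inter_subset_right)
    ((circuits_finite hE₁).subset inter_subset_right)
    ((circuits_finite hE₂).subset inter_subset_right)

end DisjointSum

section Families

variable {𝒞 𝒞₁ 𝒞₂ : Set (Set α)} {𝒳 𝒴 𝒵 : Set (Set (Set α))} {A B B₁ B₂ : Set (Set α)}
  {c : Set α}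

def directSumDep (𝒞₁ 𝒞₂ : Set (Set α)) (𝒴 𝒵 : Set (Set (Set α))) : Set (Set (Set α)) :=
  {A | A ∩ 𝒞₁ ∈ 𝒴 ∨ A ∩ 𝒞₂ ∈ 𝒵}

lemma directSumDep_comm : directSumDep 𝒞₁ 𝒞₂ 𝒴 𝒵 = directSumDep 𝒞₂ 𝒞₁ 𝒵 𝒴 :=
  ext fun _ => or_comm

lemma mem_up_of_subset (hA : A ∈ up 𝒞 𝒳) (hAB : A ⊆ B) (hB : B ⊆ 𝒞) : B ∈ up 𝒞 𝒳 :=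
  ⟨hB, hA.2.imp fun _ hA' => ⟨hA'.1, hA'.2.trans hAB⟩⟩

lemma mem_up_eps_of_mem (hA : A ∈ 𝒳) (hAB : A ⊆ B) (hB : B ⊆ 𝒞) : B ∈ up 𝒞 (eps 𝒳) :=
  ⟨hB, A, Or.inl hA, hAB⟩

lemma directSumDep_up_of_subset (hA : A ∈ directSumDep 𝒞₁ 𝒞₂ (up 𝒞₁ 𝒴) (up 𝒞₂ 𝒵))
    (hAB : A ⊆ B) : B ∈ directSumDep 𝒞₁ 𝒞₂ (up 𝒞₁ 𝒴) (up 𝒞₂ 𝒵) :=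
  hA.imp (fun h => mem_up_of_subset h (inter_subset_inter_left _ hAB) inter_subset_right)
    (fun h => mem_up_of_subset h (inter_subset_inter_left _ hAB) inter_subset_right)

lemma nontrivial_of_mem_up_eps (h𝒳 : ∀ X ∈ 𝒳, X.Nontrivial) (hA : A ∈ up 𝒞 (eps 𝒳)) :
    A.Nontrivial := by
  obtain ⟨-, V, hV, hVA⟩ := hA
  refine Set.Nontrivial.mono ?_ hVA
  rcases hV with hV | ⟨B₁, hB₁, B₂, hB₂, hB, c, hc, rfl⟩
  · exact h𝒳 V hV
  obtain ⟨x, hx₁, hx₂⟩ := not_subset.1 fun h₁₂ => hB (inter_eq_left.2 h₁₂ ▸ hB₁)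
  obtain ⟨y, hy₂, hy₁⟩ := not_subset.1 fun h₂₁ => hB (inter_eq_right.2 h₂₁ ▸ hB₂)
  refine ⟨x, ⟨Or.inl hx₁, ?_⟩, y, ⟨Or.inr hy₂, ?_⟩, ?_⟩
  · rintro rfl
    exact hx₂ hc.2
  · rintro rfl
    exact hy₁ hc.1
  · rintro rfl
    exact hx₂ hy₂

lemma mem_up_eps_iff_of_restrict (h𝒞₁ : 𝒞₁ ⊆ 𝒞) (hdisj : Disjoint 𝒞₁ 𝒞₂)
    (h𝒴 : ∀ Y ∈ 𝒴, Y ⊆ 𝒞₁) (hres : ∀ B ⊆ 𝒞₁, B ∈ 𝒳 ↔ B ∈ 𝒴)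
    (hsplit : 𝒳 ⊆ directSumDep 𝒞₁ 𝒞₂ 𝒴 𝒵) (h𝒵 : ∀ Z ∈ 𝒵, Z.Nontrivial) (hB : B ⊆ 𝒞₁) :
    B ∈ up 𝒞 (eps 𝒳) ↔ B ∈ up 𝒞₁ (eps 𝒴) := by
  constructor
  · rintro ⟨-, V, hV, hVB⟩
    rcases hV with hV | ⟨B₁, hB₁, B₂, hB₂, hB₁₂, c, hc, rfl⟩
    · exact mem_up_eps_of_mem ((hres V (hVB.trans hB)).1 hV) hVB hB
    by_cases hc₁ : c ∈ 𝒞₁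
    · have hU : B₁ ∪ B₂ ⊆ 𝒞₁ := fun x hx =>
        (em (x = c)).elim (· ▸ hc₁) fun hxc => hB (hVB ⟨hx, hxc⟩)
      refine ⟨hB, _, Or.inr ⟨B₁, (hres _ (subset_union_left.trans hU)).1 hB₁, B₂,
        (hres _ (subset_union_right.trans hU)).1 hB₂, fun h => hB₁₂ ?_, c, hc, rfl⟩, hVB⟩
      exact (hres _ (inter_subset_left.trans (subset_union_left.trans hU))).2 h
    · have hout : B₁ ∩ 𝒞₂ ⊆ {c} := fun x hx => by_contra fun hxc =>
        Set.disjoint_left.1 hdisj (hB (hVB ⟨Or.inl hx.1, hxc⟩)) hx.2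
      have hin : B₁ ∩ 𝒞₁ ⊆ B := fun x hx => hVB ⟨Or.inl hx.1, by rintro rfl; exact hc₁ hx.2⟩
      rcases hsplit hB₁ with hY | hZ
      · exact mem_up_eps_of_mem hY hin hB
      · exact absurd hout (h𝒵 _ hZ).not_subset_singleton
  · rintro ⟨-, V, hV, hVB⟩
    refine ⟨hB.trans h𝒞₁, V, ?_, hVB⟩
    rcases hV with hV | ⟨Y₁, hY₁, Y₂, hY₂, hY₁₂, c, hc, rfl⟩
    · exact Or.inl ((hres V (h𝒴 V hV)).2 hV)
    · refine Or.inr ⟨Y₁, (hres _ (h𝒴 _ hY₁)).2 hY₁, Y₂, (hres _ (h𝒴 _ hY₂)).2 hY₂,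
        fun h => hY₁₂ ?_, c, hc, rfl⟩
      exact (hres _ (inter_subset_left.trans (h𝒴 _ hY₁))).1 h

lemma eliminate_mem_directSumDep (hdisj : Disjoint 𝒞₁ 𝒞₂)
    (hB₁ : B₁ ∈ directSumDep 𝒞₁ 𝒞₂ 𝒴 𝒵) (hB₂ : B₂ ∈ directSumDep 𝒞₁ 𝒞₂ 𝒴 𝒵)
    (hc : c ∈ B₁ ∩ B₂) (hc₁ : c ∈ 𝒞₁) (hY : B₁ ∩ B₂ ∩ 𝒞₁ ∉ 𝒴) :
    (B₁ ∪ B₂) \ {c} ∈ directSumDep 𝒞₁ 𝒞₂ (up 𝒞₁ (eps 𝒴)) (up 𝒞₂ (eps 𝒵)) := by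
  have hc₂ : c ∉ 𝒞₂ := Set.disjoint_left.1 hdisj hc₁
  have hZ : ∀ {B}, B ⊆ B₁ ∪ B₂ → B ∩ 𝒞₂ ∈ 𝒵 →
      (B₁ ∪ B₂) \ {c} ∈ directSumDep 𝒞₁ 𝒞₂ (up 𝒞₁ (eps 𝒴)) (up 𝒞₂ (eps 𝒵)) :=
    fun hB hZ => Or.inr <| mem_up_eps_of_mem hZ
      (fun x hx => ⟨⟨hB hx.1, by rintro rfl; exact hc₂ hx.2⟩, hx.2⟩) inter_subset_right
  rcases hB₁ with hY₁ | hZ₁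
  swap; · exact hZ subset_union_left hZ₁
  rcases hB₂ with hY₂ | hZ₂
  swap; · exact hZ subset_union_right hZ₂
  refine Or.inl ⟨inter_subset_right, _, Or.inr ⟨_, hY₁, _, hY₂,
    by rwa [← inter_inter_distrib_right], c, ⟨⟨hc.1, hc₁⟩, hc.2, hc₁⟩, rfl⟩, ?_⟩
  exact fun x ⟨hx, hxc⟩ => ⟨⟨hx.imp And.left And.left, hxc⟩, hx.elim And.right And.right⟩

/-- `hexc₁` and `hexc₂` cover the only eliminations in `𝒳` that are not traced to a member or an
elimination of `𝒴` or `𝒵`: those where the part of `B₁ ∩ B₂` on the side of `c` is dependent. -/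
lemma up_eps_subset_directSumDep (hdisj : Disjoint 𝒞₁ 𝒞₂) (h𝒳 : ∀ X ∈ 𝒳, X ⊆ 𝒞₁ ∪ 𝒞₂)
    (hsplit : 𝒳 ⊆ directSumDep 𝒞₁ 𝒞₂ 𝒴 𝒵)
    (hexc₁ : ∀ B₁ ∈ 𝒳, ∀ B₂ ∈ 𝒳, B₁ ∩ B₂ ∉ 𝒳 → ∀ c ∈ B₁ ∩ B₂, c ∈ 𝒞₁ →
      B₁ ∩ B₂ ∩ 𝒞₁ ∈ 𝒴 → (B₁ ∪ B₂) \ {c} ∈ directSumDep 𝒞₁ 𝒞₂ (up 𝒞₁ (eps 𝒴)) (up 𝒞₂ (eps 𝒵)))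
    (hexc₂ : ∀ B₁ ∈ 𝒳, ∀ B₂ ∈ 𝒳, B₁ ∩ B₂ ∉ 𝒳 → ∀ c ∈ B₁ ∩ B₂, c ∈ 𝒞₂ →
      B₁ ∩ B₂ ∩ 𝒞₂ ∈ 𝒵 → (B₁ ∪ B₂) \ {c} ∈ directSumDep 𝒞₁ 𝒞₂ (up 𝒞₁ (eps 𝒴)) (up 𝒞₂ (eps 𝒵))) :
    up 𝒞 (eps 𝒳) ⊆ directSumDep 𝒞₁ 𝒞₂ (up 𝒞₁ (eps 𝒴)) (up 𝒞₂ (eps 𝒵)) := by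
  rintro A ⟨-, V, hV, hVA⟩
  refine directSumDep_up_of_subset ?_ hVA
  rcases hV with hV | ⟨B₁, hB₁, B₂, hB₂, hB, c, hc, rfl⟩
  · exact (hsplit hV).imp (fun h => mem_up_eps_of_mem h Subset.rfl inter_subset_right)
      (fun h => mem_up_eps_of_mem h Subset.rfl inter_subset_right)
  rcases h𝒳 B₁ hB₁ hc.1 with hc₁ | hc₂
  · by_cases hY : B₁ ∩ B₂ ∩ 𝒞₁ ∈ 𝒴
    · exact hexc₁ B₁ hB₁ B₂ hB₂ hB c hc hc₁ hY
    · exact eliminate_mem_directSumDep hdisj (hsplit hB₁) (hsplit hB₂) hc hc₁ hY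
  · by_cases hZ : B₁ ∩ B₂ ∩ 𝒞₂ ∈ 𝒵
    · exact hexc₂ B₁ hB₁ B₂ hB₂ hB c hc hc₂ hZ
    · rw [directSumDep_comm] at hsplit ⊢
      exact eliminate_mem_directSumDep hdisj.symm (hsplit hB₁) (hsplit hB₂) hc hc₂ hZ

lemma up_eps_subset_directSumDep_of_upClosed (hdisj : Disjoint 𝒞₁ 𝒞₂)
    (h𝒳 : ∀ X ∈ 𝒳, X ⊆ 𝒞₁ ∪ 𝒞₂) (hsplit : 𝒳 ⊆ directSumDep 𝒞₁ 𝒞₂ 𝒴 𝒵)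
    (h𝒴 : 𝒴 ⊆ 𝒳) (h𝒵 : 𝒵 ⊆ 𝒳) (hup : ∀ X ∈ 𝒳, ∀ B, X ⊆ B → B ⊆ 𝒞₁ ∪ 𝒞₂ → B ∈ 𝒳) :
    up 𝒞 (eps 𝒳) ⊆ directSumDep 𝒞₁ 𝒞₂ (up 𝒞₁ (eps 𝒴)) (up 𝒞₂ (eps 𝒵)) :=
  up_eps_subset_directSumDep hdisj h𝒳 hsplit
    (fun B₁ hB₁ _ _ hB _ _ _ hY => absurd (hup _ (h𝒴 hY) _ inter_subset_left
      (inter_subset_left.trans (h𝒳 B₁ hB₁))) hB)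
    (fun B₁ hB₁ _ _ hB _ _ _ hZ => absurd (hup _ (h𝒵 hZ) _ inter_subset_left
      (inter_subset_left.trans (h𝒳 B₁ hB₁))) hB)

end Families

section DerivedSequence

variable {M : Matroid α} {A B S : Set (Set α)} {T : Set α} {i : ℕ}

lemma Ai_subset_circuits (hA : A ∈ Ai M i) : A ⊆ circuits M := by
  cases i <;> exact hA.1

lemma mem_Ai_succ_of_mem (hA : A ∈ Ai M i) (hAB : A ⊆ B) (hB : B ⊆ circuits M) :
    B ∈ Ai M (i + 1) :=
  mem_up_eps_of_mem hA hAB hB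

lemma A0_nontrivial (hE : M.E.Finite) (hA : A ∈ A0 M) : A.Nontrivial := by
  obtain ⟨hAC, hlt⟩ := hA
  have hAfin : A.Finite := (circuits_finite hE).subset hAC
  have : Finite A := hAfin
  rw [← one_lt_ncard_iff_nontrivial]
  by_contra! hle
  rcases (ncard_le_one_iff_eq hAfin).1 hle with rfl | ⟨C, rfl⟩
  · simp at hlt
  · rw [supp, sUnion_singleton, ncard_singleton] at hlt
    have hC : M.IsCircuit C := mem_circuits_iff.1 (hAC rfl)
    have := one_le_nullity_of_isCircuit hC (hE.subset hC.subset_ground)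
    omega

lemma Ai_nontrivial (hE : M.E.Finite) : ∀ {i : ℕ} {A : Set (Set α)}, A ∈ Ai M i → A.Nontrivial
  | 0, _, hA => A0_nontrivial hE hA
  | _ + 1, _, hA => nontrivial_of_mem_up_eps (fun _ => Ai_nontrivial hE) hA

lemma sdiff_singleton_mem_A0 (hE : M.E.Finite) (hS : S ⊆ circuits M) (hT : T ∈ S)
    (hσ : nullity M (supp S) + 2 ≤ S.ncard) : S \ {T} ∈ A0 M := by
  refine ⟨sdiff_subset.trans hS, ?_⟩
  have := nullity_mono (M := M) (supp_finite hE hS) (supp_mono (sdiff_subset : S \ {T} ⊆ S))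
  rw [ncard_sdiff_singleton_of_mem hT]
  omega

lemma insert_mem_A0 (hE : M.E.Finite) (hS : S ⊆ circuits M) (hT : T ∈ circuits M)
    (hTS : T ⊆ supp S) (hTnot : T ∉ S) (hσ : nullity M (supp S) ≤ S.ncard) :
    insert T S ∈ A0 M := by
  refine ⟨insert_subset hT hS, ?_⟩
  rw [supp_insert_of_subset hTS, ncard_insert_of_notMem hTnot ((circuits_finite hE).subset hS)]
  omega

/-- Some circuit `T` inside `supp (S₁ ∩ S₂)` lies outside `S₁ ∩ S₂`, since there are more such
circuits than the nullity. If `T` is in one of `S₁, S₂`, adding it to the other gives a member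
of `𝒜₀`; otherwise adding it to both gives two members of `𝒜₀` whose elimination at `T` is
`S₁ ∪ S₂`. -/
lemma exists_mem_eps_A0_subset_union (hE : M.E.Finite) {S₁ S₂ : Set (Set α)}
    (hS₁ : S₁ ⊆ circuits M) (hS₂ : S₂ ⊆ circuits M)
    (hσ₁ : nullity M (supp S₁) ≤ S₁.ncard) (hσ₂ : nullity M (supp S₂) ≤ S₂.ncard)
    (hσ : (S₁ ∩ S₂).ncard < nullity M (supp (S₁ ∩ S₂))) :
    ∃ V ∈ eps (A0 M), V ⊆ S₁ ∪ S₂ := by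
  have hS : S₁ ∩ S₂ ⊆ circuits M := inter_subset_left.trans hS₁
  have hR₁ : supp (S₁ ∩ S₂) ⊆ supp S₁ := supp_mono inter_subset_left
  have hR₂ : supp (S₁ ∩ S₂) ⊆ supp S₂ := supp_mono inter_subset_right
  obtain ⟨T, ⟨hTc, hTR⟩, hTS⟩ := exists_mem_notMem_of_ncard_lt_ncard
    (hσ.trans_le (nullity_le_ncard_circuits (supp_finite hE hS) (supp_subset_ground hS)))
    ((circuits_finite hE).subset hS)
  have hT : T ∈ circuits M := mem_circuits_iff.2 hTc
  by_cases hT₁ : T ∈ S₁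
  · exact ⟨insert T S₂, Or.inl (insert_mem_A0 hE hS₂ hT (hTR.trans hR₂) (hTS ⟨hT₁, ·⟩) hσ₂),
      insert_subset (Or.inl hT₁) subset_union_right⟩
  by_cases hT₂ : T ∈ S₂
  · exact ⟨insert T S₁, Or.inl (insert_mem_A0 hE hS₁ hT (hTR.trans hR₁) hT₁ hσ₁),
      insert_subset (Or.inr hT₂) subset_union_left⟩
  have hnot : insert T S₁ ∩ insert T S₂ ∉ A0 M := by
    rintro ⟨-, hlt⟩
    rw [← insert_inter_distrib, supp_insert_of_subset hTR,
      ncard_insert_of_notMem hTS ((circuits_finite hE).subset hS)] at hlt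
    omega
  refine ⟨_, Or.inr ⟨_, insert_mem_A0 hE hS₁ hT (hTR.trans hR₁) hT₁ hσ₁,
    _, insert_mem_A0 hE hS₂ hT (hTR.trans hR₂) hT₂ hσ₂, hnot, T, ⟨mem_insert T S₁, mem_insert T S₂⟩,
    rfl⟩, ?_⟩
  rintro x ⟨hx | hx, hxT⟩ <;> exact hx.elim (fun h => absurd h hxT) (by tauto)

end DerivedSequence

section DerivedDisjointSum

variable {M₁ M₂ : Matroid α} {h : Disjoint M₁.E M₂.E} {A B B₁ B₂ : Set (Set α)} {c : Set α}

lemma mem_A0_disjointSum_iff (hE₁ : M₁.E.Finite) (hE₂ : M₂.E.Finite)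
    (hA : A ⊆ circuits (M₁.disjointSum M₂ h)) :
    A ∈ A0 (M₁.disjointSum M₂ h) ↔
      nullity M₁ (supp (A ∩ circuits M₁)) + nullity M₂ (supp (A ∩ circuits M₂)) <
        (A ∩ circuits M₁).ncard + (A ∩ circuits M₂).ncard := by
  rw [← nullity_supp_disjointSum hE₁ hE₂ hA, ← ncard_eq_ncard_inter_circuits_add hE₁ hE₂ hA]
  exact ⟨And.right, fun hlt => ⟨hA, hlt⟩⟩

lemma mem_A0_disjointSum_iff_left (hE₁ : M₁.E.Finite) (hE₂ : M₂.E.Finite)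
    (hB : B ⊆ circuits M₁) : B ∈ A0 (M₁.disjointSum M₂ h) ↔ B ∈ A0 M₁ := by
  have hB' : B ⊆ circuits (M₁.disjointSum M₂ h) :=
    circuits_disjointSum ▸ hB.trans subset_union_left
  have hnull : nullity M₂ (supp ∅) = 0 := by simp [supp, nullity]
  rw [mem_A0_disjointSum_iff hE₁ hE₂ hB', inter_eq_left.2 hB,
    ((disjoint_circuits h).mono_left hB).inter_eq, hnull, ncard_empty, add_zero, add_zero]
  exact ⟨fun hlt => ⟨hB, hlt⟩, And.right⟩

lemma A0_disjointSum_subset (hE₁ : M₁.E.Finite) (hE₂ : M₂.E.Finite) :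
    A0 (M₁.disjointSum M₂ h) ⊆ directSumDep (circuits M₁) (circuits M₂) (A0 M₁) (A0 M₂) := by
  intro A hA
  have hlt := (mem_A0_disjointSum_iff hE₁ hE₂ hA.1).1 hA
  rcases lt_or_ge (nullity M₁ (supp (A ∩ circuits M₁))) (A ∩ circuits M₁).ncard with h₁ | h₁
  · exact Or.inl ⟨inter_subset_right, h₁⟩
  · exact Or.inr ⟨inter_subset_right, by omega⟩

/-- The exceptional case of `up_eps_subset_directSumDep` at level `0`. Counting
`|·| - nullity` on both sides, either the `𝒞₁`-part of `B₁` or `B₂` stays in `𝒜₀(M₁)` after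
removing `c`, or the `𝒞₂`-parts of `B₁` and `B₂` satisfy the hypotheses of
`exists_mem_eps_A0_subset_union`. -/
lemma sdiff_mem_directSumDep_Ai_one (hE₁ : M₁.E.Finite) (hE₂ : M₂.E.Finite)
    (hB₁ : B₁ ∈ A0 (M₁.disjointSum M₂ h)) (hB₂ : B₂ ∈ A0 (M₁.disjointSum M₂ h))
    (hB : B₁ ∩ B₂ ∉ A0 (M₁.disjointSum M₂ h)) (hc : c ∈ B₁ ∩ B₂) (hc₁ : c ∈ circuits M₁)
    (hY : B₁ ∩ B₂ ∩ circuits M₁ ∈ A0 M₁) :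
    (B₁ ∪ B₂) \ {c} ∈ directSumDep (circuits M₁) (circuits M₂) (Ai M₁ 1) (Ai M₂ 1) := by
  have hc₂ : c ∉ circuits M₂ := Set.disjoint_left.1 (disjoint_circuits h) hc₁
  have hB₁₂ : B₁ ∩ B₂ ⊆ circuits (M₁.disjointSum M₂ h) := inter_subset_left.trans hB₁.1
  have h₁ := (mem_A0_disjointSum_iff hE₁ hE₂ hB₁.1).1 hB₁
  have h₂ := (mem_A0_disjointSum_iff hE₁ hE₂ hB₂.1).1 hB₂
  have h₁₂ := mt (mem_A0_disjointSum_iff hE₁ hE₂ hB₁₂).2 hB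
  have hY' := hY.2
  have hleft : ∀ {B}, B ⊆ B₁ ∪ B₂ → c ∈ B →
      nullity M₁ (supp (B ∩ circuits M₁)) + 2 ≤ (B ∩ circuits M₁).ncard →
      (B₁ ∪ B₂) \ {c} ∈ directSumDep (circuits M₁) (circuits M₂) (Ai M₁ 1) (Ai M₂ 1) :=
    fun hB hcB hσ => Or.inl <| mem_up_eps_of_mem
      (sdiff_singleton_mem_A0 hE₁ inter_subset_right ⟨hcB, hc₁⟩ hσ)
      (fun x ⟨hx, hxc⟩ => ⟨⟨hB hx.1, hxc⟩, hx.2⟩) inter_subset_right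
  by_cases hσ₁ : nullity M₁ (supp (B₁ ∩ circuits M₁)) + 2 ≤ (B₁ ∩ circuits M₁).ncard
  · exact hleft subset_union_left hc.1 hσ₁
  by_cases hσ₂ : nullity M₁ (supp (B₂ ∩ circuits M₁)) + 2 ≤ (B₂ ∩ circuits M₁).ncard
  · exact hleft subset_union_right hc.2 hσ₂
  rw [inter_inter_distrib_right _ _ (circuits M₂)] at h₁₂
  obtain ⟨V, hV, hVsub⟩ := exists_mem_eps_A0_subset_union hE₂ (inter_subset_right (s := B₁))
    (inter_subset_right (s := B₂)) (by omega) (by omega) (by omega)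
  refine Or.inr ⟨inter_subset_right, V, hV, hVsub.trans ?_⟩
  rintro x (⟨hx, hx₂⟩ | ⟨hx, hx₂⟩) <;>
    exact ⟨⟨by tauto, by rintro rfl; exact hc₂ hx₂⟩, hx₂⟩

lemma Ai_one_disjointSum_subset (hE₁ : M₁.E.Finite) (hE₂ : M₂.E.Finite) :
    Ai (M₁.disjointSum M₂ h) 1 ⊆
      directSumDep (circuits M₁) (circuits M₂) (Ai M₁ 1) (Ai M₂ 1) := by
  refine up_eps_subset_directSumDep (disjoint_circuits h)
    (fun X hX => circuits_disjointSum ▸ hX.1) (A0_disjointSum_subset hE₁ hE₂)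
    (fun _ hB₁ _ hB₂ hB _ hc hc₁ hY => sdiff_mem_directSumDep_Ai_one hE₁ hE₂ hB₁ hB₂ hB hc hc₁ hY)
    (fun B₁ hB₁ B₂ hB₂ hB c hc hc₂ hZ => ?_)
  rw [Matroid.disjointSum_comm] at hB₁ hB₂ hB
  rw [directSumDep_comm]
  exact sdiff_mem_directSumDep_Ai_one hE₂ hE₁ hB₁ hB₂ hB hc hc₂ hZ

lemma Ai_disjointSum (hE₁ : M₁.E.Finite) (hE₂ : M₂.E.Finite) (i : ℕ) :
    (∀ B ⊆ circuits M₁, B ∈ Ai (M₁.disjointSum M₂ h) i ↔ B ∈ Ai M₁ i) ∧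
      Ai (M₁.disjointSum M₂ h) i ⊆
        directSumDep (circuits M₁) (circuits M₂) (Ai M₁ i) (Ai M₂ i) := by
  induction i generalizing M₁ M₂ with
  | zero => exact ⟨fun B => mem_A0_disjointSum_iff_left hE₁ hE₂, A0_disjointSum_subset hE₁ hE₂⟩
  | succ i ih =>
    obtain ⟨hres₁, hsplit⟩ := ih (h := h) hE₁ hE₂
    have hres₂ : ∀ B ⊆ circuits M₂, B ∈ Ai (M₁.disjointSum M₂ h) i ↔ B ∈ Ai M₂ i := by
      rw [Matroid.disjointSum_comm]
      exact (ih hE₂ hE₁).1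
    have h𝒞 : circuits (M₁.disjointSum M₂ h) = circuits M₁ ∪ circuits M₂ := circuits_disjointSum
    refine ⟨fun B hB => mem_up_eps_iff_of_restrict (h𝒞 ▸ subset_union_left)
      (disjoint_circuits h) (fun _ => Ai_subset_circuits) hres₁ hsplit
      (fun _ => Ai_nontrivial hE₂) hB, ?_⟩
    cases i with
    | zero => exact Ai_one_disjointSum_subset hE₁ hE₂
    | succ j =>
      exact up_eps_subset_directSumDep_of_upClosed (disjoint_circuits h)
        (fun _ hX => h𝒞 ▸ Ai_subset_circuits hX) hsplit
        (fun _ hY => (hres₁ _ (Ai_subset_circuits hY)).2 hY)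
        (fun _ hZ => (hres₂ _ (Ai_subset_circuits hZ)).2 hZ)
        (fun _ hX _ hXB hB => mem_up_of_subset hX hXB (h𝒞 ▸ hB))

lemma mem_Ai_disjointSum_iff_left (hE₁ : M₁.E.Finite) (hE₂ : M₂.E.Finite) (i : ℕ)
    (hB : B ⊆ circuits M₁) : B ∈ Ai (M₁.disjointSum M₂ h) i ↔ B ∈ Ai M₁ i :=
  (Ai_disjointSum hE₁ hE₂ i).1 B hB

lemma mem_Ai_disjointSum_iff_right (hE₁ : M₁.E.Finite) (hE₂ : M₂.E.Finite) (i : ℕ)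
    (hB : B ⊆ circuits M₂) : B ∈ Ai (M₁.disjointSum M₂ h) i ↔ B ∈ Ai M₂ i := by
  rw [Matroid.disjointSum_comm]
  exact mem_Ai_disjointSum_iff_left hE₂ hE₁ i hB

lemma Ai_disjointSum_subset (hE₁ : M₁.E.Finite) (hE₂ : M₂.E.Finite) (i : ℕ) :
    Ai (M₁.disjointSum M₂ h) i ⊆
      directSumDep (circuits M₁) (circuits M₂) (Ai M₁ i) (Ai M₂ i) :=
  (Ai_disjointSum hE₁ hE₂ i).2

end DerivedDisjointSum

/-- δ(M₁ ⊕ M₂) = δ(M₁) ⊕ δ(M₂): a family of circuits of the direct sum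
is dependent iff its intersection with one of the two circuit collections is dependent
in the corresponding derived matroid. -/
theorem derived_disjointSum (M₁ M₂ : Matroid α) (h : Disjoint M₁.E M₂.E)
    (hE₁ : M₁.E.Finite) (hE₂ : M₂.E.Finite) :
    derivedDep (M₁.disjointSum M₂ h) =
      {A : Set (Set α) | A ⊆ circuits (M₁.disjointSum M₂ h) ∧
        (A ∩ circuits M₁ ∈ derivedDep M₁ ∨ A ∩ circuits M₂ ∈ derivedDep M₂)} := by
  ext A
  simp only [derivedDep, mem_iUnion, mem_ofPred_eq]
  constructor
  · rintro ⟨i, hA⟩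
    exact ⟨Ai_subset_circuits hA, (Ai_disjointSum_subset hE₁ hE₂ i hA).imp (⟨i, ·⟩) (⟨i, ·⟩)⟩
  · rintro ⟨hA, ⟨i, hi⟩ | ⟨i, hi⟩⟩
    · exact ⟨i + 1, mem_Ai_succ_of_mem
        ((mem_Ai_disjointSum_iff_left hE₁ hE₂ i inter_subset_right).2 hi) inter_subset_left hA⟩
    · exact ⟨i + 1, mem_Ai_succ_of_mem
        ((mem_Ai_disjointSum_iff_right hE₁ hE₂ i inter_subset_right).2 hi) inter_subset_left hA⟩

end DM
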